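/- arXiv:1606.07527 — 3 statements merged into one kernel-verified Lean document; each statement's English description precedes it below -/
import Mathlib

section
/- For any topo-model, θ ∈ Φ, and formulas φ, ψ: [[ψ]]^{θ^φ} = [[⟨φ⟩ψ]]^θ, where ⟨φ⟩ψ abbreviates ¬[φ]¬ψ. -/
inductive Formula (A : Type) : Type
  | atom : ℕ → Formula A
  | neg : Formula A → Formula A
  | and : Formula A → Formula A → Formula A
  | know : A → Formula A → Formula A
  | int : Formula A → Formula A
  | ann : Formula A → Formula A → Formula A
  | box : Formula A → Formula A

namespace Formula

variable {A : Type}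

/-- The size `S` of a formula. -/
def S : Formula A → ℕ
  | atom _ => 1
  | neg φ => S φ + 1
  | and φ ψ => S φ + S ψ
  | know _ φ => S φ + 1
  | int φ => S φ + 1
  | ann φ ψ => S φ + 4 * S ψ
  | box φ => S φ + 1

/-- The `□`-depth `d` of a formula. -/
def d : Formula A → ℕ
  | atom _ => 0
  | neg φ => d φ
  | and φ ψ => max (d φ) (d ψ)
  | know _ φ => d φ
  | int φ => d φ
  | ann φ ψ => max (d φ) (d ψ)
  | box φ => d φ + 1

/-- The order `φ <^S_d ψ`. -/
def slt (φ ψ : Formula A) : Prop :=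
  d φ < d ψ ∨ (d φ = d ψ ∧ S φ < S ψ)

/-- `φ` contains no occurrence of `□`, i.e. `φ` is in the fragment `PAL_int`. -/
def noBox : Formula A → Prop
  | atom _ => True
  | neg φ => noBox φ
  | and φ ψ => noBox φ ∧ noBox ψ
  | know _ φ => noBox φ
  | int φ => noBox φ
  | ann φ ψ => noBox φ ∧ noBox ψ
  | box _ => False

lemma S_pos (φ : Formula A) : 0 < S φ := by
  induction φ <;> simp [S] <;> omega

lemma d_eq_zero_of_noBox {φ : Formula A} (h : noBox φ) : d φ = 0 := by
  induction φ <;> simp_all [noBox, d]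

end Formula

/-- A partial function `θ : X ⇀ (A → Set X)`, given by a domain and a total function. -/
structure PFun' (X A : Type) where
  Dom : Set X
  f : X → A → Set X

/-- The restriction `θ|_U`. -/
def PFun'.restrict {X A : Type} (θ : PFun' X A) (U : Set X) : PFun' X A :=
  ⟨θ.Dom ∩ U, fun x i => θ.f x i ∩ U⟩

/-- `Φ` is a neighbourhood function set on the topological space `X`. -/
def IsNbhdFuncSet {X A : Type} [TopologicalSpace X] (Φ : Set (PFun' X A)) : Prop :=
  ∀ θ ∈ Φ,
    (∀ x ∈ θ.Dom, ∀ i : A,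
      IsOpen (θ.f x i) ∧ x ∈ θ.f x i ∧ θ.f x i ⊆ θ.Dom ∧
      (∀ y ∈ θ.f x i, θ.f x i = θ.f y i)) ∧
    (∀ U : Set X, IsOpen U → θ.restrict U ∈ Φ)

private lemma lex_helper {a b c e : ℕ} (h : a < c ∨ (a = c ∧ b < e)) :
    Prod.Lex (· < ·) (· < ·) (a, b) (c, e) := by
  rcases h with h | ⟨h, h'⟩
  · exact Prod.Lex.left _ _ h
  · subst h; exact Prod.Lex.right _ h'

variable {X A : Type} [TopologicalSpace X]

/-- Satisfaction `M,(x,θ) ⊨ φ` at a neighbourhood situation. -/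
def sat (V : ℕ → Set X) : PFun' X A → X → Formula A → Prop
  | θ, x, .atom p => x ∈ V p
  | θ, x, .neg φ => ¬ sat V θ x φ
  | θ, x, .and φ ψ => sat V θ x φ ∧ sat V θ x ψ
  | θ, x, .know i φ => ∀ y ∈ θ.f x i, sat V θ y φ
  | θ, x, .int φ => x ∈ interior {y | y ∈ θ.Dom ∧ sat V θ y φ}
  | θ, x, .ann φ ψ =>
      x ∈ interior {y | y ∈ θ.Dom ∧ sat V θ y φ} →
      sat V (θ.restrict (interior {y | y ∈ θ.Dom ∧ sat V θ y φ})) x ψ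
  | θ, x, .box φ => ∀ ψ : Formula A, ψ.noBox → sat V θ x (.ann ψ φ)
termination_by θ x φ => (Formula.d φ, Formula.S φ)
decreasing_by
  all_goals
    apply lex_helper
    simp only [Formula.d, Formula.S, true_and]
    first
      | omega
      | (have s1 := Formula.S_pos φ; have s2 := Formula.S_pos ψ; omega)
      | (rename_i h
         have hd := Formula.d_eq_zero_of_noBox h
         have s1 := Formula.S_pos φ
         have s2 := Formula.S_pos ψ
         omega)

/-- The truth set `[[φ]]^θ`. -/
def truthSet (V : ℕ → Set X) (θ : PFun' X A) (φ : Formula A) : Set X :=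
  {y | y ∈ θ.Dom ∧ sat V θ y φ}

/-- The updated neighbourhood function `θ^φ`. -/
def update (V : ℕ → Set X) (θ : PFun' X A) (φ : Formula A) : PFun' X A :=
  θ.restrict (interior (truthSet V θ φ))

/-- The diamond announcement `⟨φ⟩ψ := ¬[φ]¬ψ`. -/
def Formula.diam (φ ψ : Formula A) : Formula A := .neg (.ann φ (.neg ψ))

lemma sat_diam (V : ℕ → Set X) (θ : PFun' X A) (x : X) (φ ψ : Formula A) :
    sat V θ x (Formula.diam φ ψ) ↔
      x ∈ interior (truthSet V θ φ) ∧ sat V (update V θ φ) x ψ := by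
  simp only [Formula.diam, sat, Classical.not_imp, not_not]
  rfl

lemma mem_update_dom {V : ℕ → Set X} {θ : PFun' X A} {φ : Formula A} {x : X} :
    x ∈ (update V θ φ).Dom ↔ x ∈ θ.Dom ∧ x ∈ interior (truthSet V θ φ) :=
  Iff.rfl

theorem stmt13_general {X A : Type} [TopologicalSpace X] (V : ℕ → Set X) (θ : PFun' X A)
    (φ ψ : Formula A) :
    truthSet V (update V θ φ) ψ = truthSet V θ (Formula.diam φ ψ) := by
  ext x
  change x ∈ (update V θ φ).Dom ∧ _ ↔ x ∈ θ.Dom ∧ _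
  rw [mem_update_dom, sat_diam, and_assoc]

/-- `[[ψ]]^{θ^φ} = [[⟨φ⟩ψ]]^θ`. -/
theorem stmt13 {X A : Type} [TopologicalSpace X] (Φ : Set (PFun' X A))
    (hΦ : IsNbhdFuncSet Φ) (V : ℕ → Set X) (θ : PFun' X A) (hθ : θ ∈ Φ)
    (φ ψ : Formula A) :
    truthSet V (update V θ φ) ψ = truthSet V θ (Formula.diam φ ψ) :=
  stmt13_general V θ φ ψ
end

section
/- For any topo-model, θ ∈ Φ, and formulas φ, ψ: (θ^φ)^ψ = θ^{⟨φ⟩int(ψ)}, i.e., successive updates by φ and then ψ equal the single update by ⟨φ⟩int(ψ), where ⟨φ⟩χ = ¬[φ]¬χ. -/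
variable {X A : Type} [TopologicalSpace X]

/-!
Everything the second update keeps lies in `Dom(θ^φ) ⊆ Int([[φ]]^θ)`, so the two successive
restrictions collapse to the restriction to `Int([[ψ]]^{θ^φ})`; and this open set is exactly
`[[⟨φ⟩int(ψ)]]^θ`.
-/

lemma PFun'.restrict_restrict {X A : Type} (θ : PFun' X A) (U W : Set X) :
    (θ.restrict U).restrict W = θ.restrict (U ∩ W) := by
  simp only [PFun'.restrict, Set.inter_assoc]

lemma sat_neg (V : ℕ → Set X) (θ : PFun' X A) (x : X) (φ : Formula A) :
    sat V θ x (.neg φ) ↔ ¬ sat V θ x φ := by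
  rw [sat]

lemma sat_int (V : ℕ → Set X) (θ : PFun' X A) (x : X) (φ : Formula A) :
    sat V θ x (.int φ) ↔ x ∈ interior (truthSet V θ φ) := by
  rw [sat]; rfl

lemma sat_ann (V : ℕ → Set X) (θ : PFun' X A) (x : X) (φ ψ : Formula A) :
    sat V θ x (.ann φ ψ) ↔ (x ∈ interior (truthSet V θ φ) → sat V (update V θ φ) x ψ) := by
  rw [sat]; rfl

lemma truthSet_subset_dom (V : ℕ → Set X) (θ : PFun' X A) (φ : Formula A) :
    truthSet V θ φ ⊆ θ.Dom :=
  fun _ hy => hy.1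

lemma truthSet_update_subset (V : ℕ → Set X) (θ : PFun' X A) (φ ψ : Formula A) :
    truthSet V (update V θ φ) ψ ⊆ θ.Dom ∩ interior (truthSet V θ φ) :=
  truthSet_subset_dom V (update V θ φ) ψ

lemma truthSet_diam_int (V : ℕ → Set X) (θ : PFun' X A) (φ ψ : Formula A) :
    truthSet V θ (Formula.diam φ (.int ψ)) = interior (truthSet V (update V θ φ) ψ) := by
  ext y
  simp only [truthSet, Set.mem_ofPred_eq, sat_diam, sat_int]
  constructor
  · rintro ⟨-, -, hy⟩
    exact hy
  · intro hy
    obtain ⟨hdom, hint⟩ := truthSet_update_subset V θ φ ψ (interior_subset hy)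
    exact ⟨hdom, hint, hy⟩

theorem stmt15_general {X A : Type} [TopologicalSpace X] (V : ℕ → Set X) (θ : PFun' X A)
    (φ ψ : Formula A) :
    update V (update V θ φ) ψ = update V θ (Formula.diam φ (.int ψ)) := by
  have hsub : interior (truthSet V (update V θ φ) ψ) ⊆ interior (truthSet V θ φ) :=
    interior_subset.trans ((truthSet_update_subset V θ φ ψ).trans Set.inter_subset_right)
  calc update V (update V θ φ) ψ
      = θ.restrict (interior (truthSet V θ φ) ∩ interior (truthSet V (update V θ φ) ψ)) :=
        PFun'.restrict_restrict _ _ _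
    _ = θ.restrict (interior (truthSet V (update V θ φ) ψ)) := by
        rw [Set.inter_eq_right.mpr hsub]
    _ = update V θ (Formula.diam φ (.int ψ)) := by
        rw [update.eq_1 V θ (Formula.diam φ _), truthSet_diam_int, interior_interior]

/-- `(θ^φ)^ψ = θ^{⟨φ⟩int(ψ)}`. -/
theorem stmt15 {X A : Type} [TopologicalSpace X] (Φ : Set (PFun' X A))
    (hΦ : IsNbhdFuncSet Φ) (V : ℕ → Set X) (θ : PFun' X A) (hθ : θ ∈ Φ)
    (φ ψ : Formula A) :
    update V (update V θ φ) ψ = update V θ (Formula.diam φ (.int ψ)) :=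
  stmt15_general V θ φ ψ
end

section
/- The reduction equivalence [φ]ψ ↔ [int(φ)]ψ is valid on all topo-models. -/
variable {X A : Type} [TopologicalSpace X]

section

variable (V : ℕ → Set X) (θ : PFun' X A)

lemma sat_int_iff (x : X) (φ : Formula A) :
    sat V θ x (.int φ) ↔ x ∈ interior (truthSet V θ φ) := by
  rw [sat]; rfl

lemma sat_ann_iff (x : X) (φ ψ : Formula A) :
    sat V θ x (.ann φ ψ) ↔
      (x ∈ interior (truthSet V θ φ) → sat V (update V θ φ) x ψ) := by
  rw [sat]; rfl

lemma truthSet_int (φ : Formula A) :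
    truthSet V θ (.int φ) = interior (truthSet V θ φ) := by
  ext y
  simp only [truthSet, Set.mem_ofPred_eq, sat_int_iff, and_iff_right_iff_imp]
  exact fun hy => (interior_subset hy).1

lemma interior_truthSet_int (φ : Formula A) :
    interior (truthSet V θ (.int φ)) = interior (truthSet V θ φ) := by
  rw [truthSet_int, interior_interior]

lemma update_int (φ : Formula A) : update V θ (.int φ) = update V θ φ := by
  rw [update, update, interior_truthSet_int]

end

theorem stmt16_general {X A : Type} [TopologicalSpace X] (V : ℕ → Set X) (θ : PFun' X A)
    (x : X) (φ ψ : Formula A) :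
    sat V θ x (.ann φ ψ) ↔ sat V θ x (.ann (.int φ) ψ) := by
  rw [sat_ann_iff, sat_ann_iff, update_int, interior_truthSet_int]

/-- `[φ]ψ ↔ [int(φ)]ψ` is valid on all topo-models. -/
theorem stmt16 {X A : Type} [TopologicalSpace X] (Φ : Set (PFun' X A))
    (hΦ : IsNbhdFuncSet Φ) (V : ℕ → Set X) (θ : PFun' X A) (hθ : θ ∈ Φ)
    (x : X) (hx : x ∈ θ.Dom) (φ ψ : Formula A) :
    sat V θ x (.ann φ ψ) ↔ sat V θ x (.ann (.int φ) ψ) :=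
  stmt16_general V θ x φ ψ
end
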